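/- arXiv:1904.13116 — 3 statements merged into one kernel-verified Lean document; each statement's English description precedes it below -/
import Mathlib

section
/- Restriction of the Kenig–Pipher condition to subdomains: there is a constant C > 0 depending only on n with the following property. Let E ⊆ ℝ^{n+1} be nonempty and closed, and let A be a real (n+1)×(n+1) matrix-valued function on ℝ^{n+1}∖E that is λ-elliptic and locally Lipschitz there (so its gradient ∇A exists a.e. by Rademacher's theorem), with |∇A(X)|·dist(X,E) ≤ Λ₁ for a.e. X ∉ E and sup over x ∈ E, r > 0 of r^{−n}∫_{B(x,r)∖E}|∇A(Y)|² dist(Y,E) dY ≤ Λ₂. Then for every open subset D ⊆ ℝ^{n+1}∖E one has |∇A(X)|·dist(X,∂D) ≤ Λ₁ for a.e. X ∈ D and ‖|∇A|‖_{CME(D)} ≤ C(Λ₂ + Λ₁²); in particular A belongs to the Kenig–Pipher class KP(D). -/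
open MeasureTheory Metric Set
open scoped ENNReal NNReal

noncomputable section

/-- The ambient Euclidean space `ℝ^{n+1}`. -/
abbrev ES (n : ℕ) : Type := EuclideanSpace ℝ (Fin (n + 1))

namespace Paper

variable {n : ℕ}

/-- `E` is an `n`-dimensional Ahlfors–David regular (ADR) set with constant `C₁`. -/
def ADR (n : ℕ) (E : Set (ES n)) (C₁ : ℝ) : Prop :=
  E.Nonempty ∧ IsClosed E ∧ 1 ≤ C₁ ∧
    ∀ x ∈ E, ∀ r : ℝ, 0 < r → ENNReal.ofReal r < EMetric.diam E →
      ENNReal.ofReal (C₁⁻¹ * r ^ n) ≤ μH[(n : ℝ)] (E ∩ ball x r) ∧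
        μH[(n : ℝ)] (E ∩ ball x r) ≤ ENNReal.ofReal (C₁ * r ^ n)

/-- `E` is `n`-dimensional uniformly rectifiable (UR) with character `(θ, M₁, C₁)`:
big pieces of Lipschitz images. -/
def UR (n : ℕ) (E : Set (ES n)) (θ M₁ C₁ : ℝ) : Prop :=
  ADR n E C₁ ∧ 1 ≤ θ ∧ 1 ≤ M₁ ∧
    ∀ x ∈ E, ∀ r : ℝ, 0 < r → ENNReal.ofReal r < EMetric.diam E →
      ∃ ρ : EuclideanSpace ℝ (Fin n) → ES n,
        LipschitzWith M₁.toNNReal ρ ∧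
          ENNReal.ofReal (θ⁻¹ * r ^ n) ≤
            μH[(n : ℝ)] (E ∩ ball x r ∩ ρ '' ball (0 : EuclideanSpace ℝ (Fin n)) r)

/-- `E` is `n`-dimensional UR with UR character at most `N`. -/
def URCharLe (n : ℕ) (E : Set (ES n)) (N : ℝ) : Prop :=
  ∃ θ M₁ C₁ : ℝ, UR n E θ M₁ C₁ ∧ θ ≤ N ∧ M₁ ≤ N ∧ C₁ ≤ N

/-- The (interior) corkscrew condition with constant `c`. -/
def Corkscrew (Ω : Set (ES n)) (c : ℝ) : Prop :=
  ∀ x ∈ frontier Ω, ∀ r : ℝ, 0 < r → ENNReal.ofReal r < EMetric.diam (frontier Ω) →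
    ∃ X : ES n, ball X (c * r) ⊆ ball x r ∩ Ω

/-- Distance between two sets. -/
def setDist (s t : Set (ES n)) : ℝ := sInf {d : ℝ | ∃ p ∈ s, ∃ q ∈ t, d = dist p q}

/-- `log₂⁺`. -/
def log2pos (t : ℝ) : ℝ := max 0 (Real.logb 2 t)

/-- The Harnack chain condition with constant `C`. -/
def HarnackChain (Ω : Set (ES n)) (C : ℝ) : Prop :=
  ∀ X₁ ∈ Ω, ∀ X₂ ∈ Ω,
    ∃ (N : ℕ) (c : Fin (N + 1) → ES n) (ρ : Fin (N + 1) → ℝ),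
      ((N : ℝ) + 1 ≤ C * (2 + log2pos (dist X₁ X₂ /
          min (Metric.infDist X₁ (frontier Ω)) (Metric.infDist X₂ (frontier Ω))))) ∧
      (∀ k, ball (c k) (ρ k) ⊆ Ω) ∧
      X₁ ∈ ball (c 0) (ρ 0) ∧ X₂ ∈ ball (c (Fin.last N)) (ρ (Fin.last N)) ∧
      (∀ k : Fin N,
        (ball (c k.castSucc) (ρ k.castSucc) ∩ ball (c k.succ) (ρ k.succ)).Nonempty) ∧
      ∀ k, C⁻¹ * Metric.diam (ball (c k) (ρ k)) ≤ setDist (ball (c k) (ρ k)) (frontier Ω) ∧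
        setDist (ball (c k) (ρ k)) (frontier Ω) ≤ C * Metric.diam (ball (c k) (ρ k))

/-- `D` is a chord-arc domain with CAD character at most `N`: Harnack chains with
constant `N`, interior and exterior corkscrews with constant `N⁻¹`, and ADR boundary
with constant `N`. -/
def CAD (n : ℕ) (D : Set (ES n)) (N : ℝ) : Prop :=
  IsOpen D ∧ 1 ≤ N ∧ HarnackChain D N ∧ Corkscrew D N⁻¹ ∧
    Corkscrew ((closure D)ᶜ) N⁻¹ ∧ ADR n (frontier D) N

/-- Last coordinate (the "vertical" direction of a graph). -/
def lastCoord (y : ES n) : ℝ := y (Fin.last n)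

/-- First `n` coordinates. -/
def initCoords (y : ES n) : EuclideanSpace ℝ (Fin n) := WithLp.toLp 2 (fun i : Fin n => y i.castSucc)

/-- The region above the graph of `ψ` in standard coordinates. -/
def upperGraph (ψ : EuclideanSpace ℝ (Fin n) → ℝ) : Set (ES n) :=
  {y | ψ (initCoords y) < lastCoord y}

/-- The open cylinder of radius `ρ` and height `h`, centered at `x`, whose axis is
parallel to the `t`-axis of the coordinate system given by the rigid motion `e`. -/
def graphCylinder (e : ES n ≃ᵃⁱ[ℝ] ES n) (x : ES n) (ρ h : ℝ) : Set (ES n) :=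
  e '' {y | dist (initCoords y) (initCoords (e.symm x)) < ρ ∧
      |lastCoord y - lastCoord (e.symm x)| < h / 2}

/-- `Ω` is a bounded Lipschitz domain with Lipschitz character `(M, m, C₀)`. -/
def IsBddLipDomain (n : ℕ) (Ω : Set (ES n)) (M : ℝ) (m : ℕ) (C₀ : ℝ) : Prop :=
  IsOpen Ω ∧ IsConnected Ω ∧ Bornology.IsBounded Ω ∧ 1 ≤ M ∧ 1 ≤ m ∧ 1 ≤ C₀ ∧
    ∃ rΩ : ℝ, 0 < rΩ ∧
      ∃ (x : Fin m → ES n) (r : Fin m → ℝ),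
        (∀ j, x j ∈ frontier Ω) ∧
        (∀ j, C₀⁻¹ * rΩ < r j ∧ r j < C₀ * rΩ) ∧
        (frontier Ω ⊆ ⋃ j, ball (x j) (r j)) ∧
        ∀ j, ∃ (e : ES n ≃ᵃⁱ[ℝ] ES n) (ψ : EuclideanSpace ℝ (Fin n) → ℝ),
          LipschitzWith M.toNNReal ψ ∧ x j ∈ frontier (e '' upperGraph ψ) ∧
            graphCylinder e (x j) (2 * r j) (8 * (M + 1) * r j) ∩ Ω =
              graphCylinder e (x j) (2 * r j) (8 * (M + 1) * r j) ∩ (e '' upperGraph ψ)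

/-- `Ω` is a bounded Lipschitz domain with Lipschitz character at most `M₀`. -/
def LipCharLe (n : ℕ) (Ω : Set (ES n)) (M₀ : ℝ) : Prop :=
  ∃ (M : ℝ) (m : ℕ) (C₀ : ℝ),
    IsBddLipDomain n Ω M m C₀ ∧ M ≤ M₀ ∧ (m : ℝ) ≤ M₀ ∧ C₀ ≤ M₀

/-- The Carleson measure norm `‖F‖_{CME(Ω)}`, as an element of `[0,∞]`. -/
def CME (n : ℕ) (Ω : Set (ES n)) (F : ES n → ℝ) : ℝ≥0∞ :=
  ⨆ (x : ES n) (_ : x ∈ frontier Ω) (r : ℝ) (_ : 0 < r),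
    (ENNReal.ofReal (r ^ n))⁻¹ *
      ∫⁻ Y in ball x r ∩ Ω, ENNReal.ofReal (F Y ^ 2 * Metric.infDist Y (frontier Ω))

/-- The Carleson measure norm `‖F‖_{CME(ℝ^{n+1}∖E)}`, with distances taken to `E`. -/
def CMEc (n : ℕ) (E : Set (ES n)) (F : ES n → ℝ) : ℝ≥0∞ :=
  ⨆ (x : ES n) (_ : x ∈ E) (r : ℝ) (_ : 0 < r),
    (ENNReal.ofReal (r ^ n))⁻¹ *
      ∫⁻ Y in ball x r \ E, ENNReal.ofReal (F Y ^ 2 * Metric.infDist Y E)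

/-- `F` is locally square-integrable on `Ω`. -/
def LocL2 (n : ℕ) (Ω : Set (ES n)) (F : ES n → ℝ) : Prop :=
  LocallyIntegrableOn (fun Y => F Y ^ 2) Ω volume

variable {n : ℕ}

/-- The (possibly truncated) non-tangential cone of aperture `κ` with vertex `x`,
relative to the open set `Ω` with "boundary" `B`; when `Ω` is unbounded but `B` is
bounded, the cone is truncated at scale `2 diam B`. -/
def cone (Ω B : Set (ES n)) (κ : ℝ) (x : ES n) : Set (ES n) :=
  {Y | Y ∈ Ω ∧ dist Y x ≤ (1 + κ) * Metric.infDist Y B ∧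
    (¬Bornology.IsBounded Ω ∧ Bornology.IsBounded B → dist Y x < 2 * Metric.diam B)}

/-- Truncated cone `Γ^r`. -/
def coneT (Ω B : Set (ES n)) (κ : ℝ) (x : ES n) (r : ℝ) : Set (ES n) :=
  cone Ω B κ x ∩ ball x r

/-- Non-tangential maximal function `N_{*,Ω,κ}H(x)`, valued in `[0,∞]`. -/
def ntMax (Ω B : Set (ES n)) (κ : ℝ) (H : ES n → ℝ) (x : ES n) : ℝ≥0∞ :=
  ⨆ (Y : ES n) (_ : Y ∈ cone Ω B κ x), ENNReal.ofReal |H Y|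

/-- Truncated non-tangential maximal function `N^r_{*,Ω,κ}H(x)`. -/
def ntMaxT (Ω B : Set (ES n)) (κ r : ℝ) (H : ES n → ℝ) (x : ES n) : ℝ≥0∞ :=
  ⨆ (Y : ES n) (_ : Y ∈ coneT Ω B κ x r), ENNReal.ofReal |H Y|

/-- Square function `S_{Ω,κ}(x)`, applied to the scalar field `g = |∇u|`. -/
def sqFn (Ω B : Set (ES n)) (κ : ℝ) (g : ES n → ℝ) (x : ES n) : ℝ≥0∞ :=
  (∫⁻ Y in cone Ω B κ x,
      ENNReal.ofReal (g Y ^ 2 * Metric.infDist Y B ^ ((1 : ℤ) - n))) ^ (1 / 2 : ℝ)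

/-- Truncated square function `S^r_{Ω,κ}(x)`. -/
def sqFnT (Ω B : Set (ES n)) (κ r : ℝ) (g : ES n → ℝ) (x : ES n) : ℝ≥0∞ :=
  (∫⁻ Y in coneT Ω B κ x r,
      ENNReal.ofReal (g Y ^ 2 * Metric.infDist Y B ^ ((1 : ℤ) - n))) ^ (1 / 2 : ℝ)

/-- `L^q` norm over `A` with respect to `n`-dimensional Hausdorff measure. -/
def LqNorm (q : ℝ) (A : Set (ES n)) (f : ES n → ℝ≥0∞) : ℝ≥0∞ :=
  (∫⁻ y in A, f y ^ q ∂μH[(n : ℝ)]) ^ (1 / q)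

/-- Closed axis-parallel cube centered at `z` of side length `l`. -/
def cube (z : ES n) (l : ℝ) : Set (ES n) := {Y | ∀ i, |Y i - z i| ≤ l / 2}

/-- Interior boundedness (Moser-type) condition with constant `C₀`. -/
def IntBdd (n : ℕ) (D : Set (ES n)) (u : ES n → ℝ) (C₀ : ℝ) : Prop :=
  ∀ (c : ℝ) (z : ES n) (l : ℝ), 0 < l → cube z (2 * l) ⊆ D →
    ∀ X ∈ cube z l,
      |u X - c| ≤ C₀ * Real.sqrt ((∫ Y in cube z (2 * l), (u Y - c) ^ 2) / l ^ (n + 1))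

/-- Interior reverse Hölder condition with exponent `p` and constant `C₀'`. -/
def RevHolder (n : ℕ) (D : Set (ES n)) (u : ES n → ℝ) (p C₀' : ℝ) : Prop :=
  ∀ (z : ES n) (l : ℝ), 0 < l → cube z (2 * l) ⊆ D →
    ((∫ Y in cube z l, ‖gradient u Y‖ ^ p) / l ^ (n + 1)) ^ (1 / p) ≤
      C₀' * Real.sqrt ((∫ Y in cube z (2 * l), ‖gradient u Y‖ ^ 2) / l ^ (n + 1))

/-- `A` is `λ`-elliptic (a.e.) on `O`. -/
def Elliptic (n : ℕ) (O : Set (ES n)) (A : ES n → Fin (n + 1) → Fin (n + 1) → ℝ)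
    (lam : ℝ) : Prop :=
  ∀ᵐ X ∂(volume.restrict O), ∀ ξ ζ : ES n,
    lam⁻¹ * ‖ξ‖ ^ 2 ≤ ∑ i, (∑ j, A X i j * ξ j) * ξ i ∧
      |∑ i, (∑ j, A X i j * ξ j) * ζ i| ≤ lam * ‖ξ‖ * ‖ζ‖

/-- `|∇A(X)|` (via the a.e.-defined gradients of the entries). -/
def gradA (n : ℕ) (A : ES n → Fin (n + 1) → Fin (n + 1) → ℝ) (X : ES n) : ℝ :=
  Real.sqrt (∑ i, ∑ j, ‖gradient (fun Y => A Y i j) X‖ ^ 2)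

/-- `f` is locally Lipschitz on the open set `O`. -/
def LocLipOn (n : ℕ) (f : ES n → ℝ) (O : Set (ES n)) : Prop :=
  ∀ x ∈ O, ∃ (K : ℝ≥0) (r : ℝ), 0 < r ∧ ball x r ⊆ O ∧ LipschitzOnWith K f (ball x r)

/-- `A` belongs to the Kenig–Pipher class `KP(O)` with constants `(Λ₁, Λ₂)`. -/
def KP (n : ℕ) (O : Set (ES n)) (A : ES n → Fin (n + 1) → Fin (n + 1) → ℝ)
    (Λ₁ Λ₂ : ℝ) : Prop :=
  0 ≤ Λ₁ ∧ 0 ≤ Λ₂ ∧ (∀ i j, LocLipOn n (fun Y => A Y i j) O) ∧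
    (∀ᵐ X ∂(volume.restrict O), gradA n A X * Metric.infDist X (frontier O) ≤ Λ₁) ∧
    CME n O (gradA n A) ≤ ENNReal.ofReal Λ₂

/-- `A` belongs to `KP(ℝ^{n+1}∖E)` with constants `(Λ₁, Λ₂)`, distances taken to `E`. -/
def KPc (n : ℕ) (E : Set (ES n)) (A : ES n → Fin (n + 1) → Fin (n + 1) → ℝ)
    (Λ₁ Λ₂ : ℝ) : Prop :=
  0 ≤ Λ₁ ∧ 0 ≤ Λ₂ ∧ (∀ i j, LocLipOn n (fun Y => A Y i j) Eᶜ) ∧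
    (∀ᵐ X ∂(volume.restrict Eᶜ), gradA n A X * Metric.infDist X E ≤ Λ₁) ∧
    CMEc n E (gradA n A) ≤ ENNReal.ofReal Λ₂

/-- `u` is a weak solution of `-div(A∇u) = 0` in `O`. -/
def WeakSol (n : ℕ) (O : Set (ES n)) (A : ES n → Fin (n + 1) → Fin (n + 1) → ℝ)
    (u : ES n → ℝ) : Prop :=
  ∀ Ψ : ES n → ℝ, ContDiff ℝ (⊤ : ℕ∞) Ψ → HasCompactSupport Ψ → tsupport Ψ ⊆ O →
    ∫ X in O, ∑ i, (∑ j, A X i j * gradient u X j) * gradient Ψ X i = 0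

/-- `u` is a weak subsolution of `-div(A∇u) = 0` in `O`. -/
def WeakSubSol (n : ℕ) (O : Set (ES n)) (A : ES n → Fin (n + 1) → Fin (n + 1) → ℝ)
    (u : ES n → ℝ) : Prop :=
  ∀ Ψ : ES n → ℝ, ContDiff ℝ (⊤ : ℕ∞) Ψ → HasCompactSupport Ψ → tsupport Ψ ⊆ O →
    (∀ X, 0 ≤ Ψ X) →
    ∫ X in O, ∑ i, (∑ j, A X i j * gradient u X j) * gradient Ψ X i ≤ 0


/-- Partial derivative `∂_i f` (via the a.e./junk-valued full derivative). -/
def pd (n : ℕ) (i : Fin (n + 1)) (f : ES n → ℝ) : ES n → ℝ :=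
  fun X => fderiv ℝ f X (EuclideanSpace.single i (1 : ℝ))

/-- Iterated partial derivative `∂_i^k f`. -/
def pdPow (n : ℕ) (i : Fin (n + 1)) : ℕ → (ES n → ℝ) → ES n → ℝ
  | 0, f => f
  | k + 1, f => pd n i (pdPow n i k f)

/-- The multi-index derivative `∂^α f`. -/
def mDeriv (n : ℕ) (α : Fin (n + 1) → ℕ) (f : ES n → ℝ) : ES n → ℝ :=
  (List.finRange (n + 1)).foldr (fun i g => pdPow n i (α i) g) f

/-- The finset of multi-indices `α ∈ ℕ₀^{n+1}` with `|α| = m`. -/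
def MIdx (n m : ℕ) : Finset (Fin (n + 1) → ℕ) := Finset.Nat.antidiagonalTuple (n + 1) m

/-- Derivative along an ordered sequence of directions. -/
def seqDeriv (n : ℕ) : (ℓ : ℕ) → (Fin ℓ → Fin (n + 1)) → (ES n → ℝ) → ES n → ℝ
  | 0, _, f => f
  | ℓ + 1, v, f => pd n (v 0) (seqDeriv n ℓ (fun i => v i.succ) f)

/-- `|∇^ℓ u(X)|² = Σ_j Σ_{|α|=ℓ} (ℓ!/α!) |∂^α u_j(X)|²`, written as the sum of the
squares of all ordered iterated partial derivatives of order `ℓ`. -/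
def gradVecNormSq (n K ℓ : ℕ) (u : ES n → Fin K → ℝ) (X : ES n) : ℝ :=
  ∑ j : Fin K, ∑ v : Fin ℓ → Fin (n + 1), (seqDeriv n ℓ v (fun Y => u Y j) X) ^ 2

/-- `|∇^ℓ u(X) - ∇^ℓ u(X')|`. -/
def gradVecDiffNorm (n K ℓ : ℕ) (u : ES n → Fin K → ℝ) (X X' : ES n) : ℝ :=
  Real.sqrt (∑ j : Fin K, ∑ v : Fin ℓ → Fin (n + 1),
    (seqDeriv n ℓ v (fun Y => u Y j) X - seqDeriv n ℓ v (fun Y => u Y j) X') ^ 2)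

/-- The Legendre–Hadamard ellipticity condition with constant `lam`. -/
def LegendreHadamard (n K m : ℕ)
    (a : Fin K → Fin K → (Fin (n + 1) → ℕ) → (Fin (n + 1) → ℕ) → ℝ) (lam : ℝ) : Prop :=
  ∀ (ξ : ES n) (ζ : Fin K → ℝ),
    lam * ‖ξ‖ ^ (2 * m) * ∑ j, ζ j ^ 2 ≤
      ∑ j, ∑ k, ∑ α ∈ MIdx n m, ∑ β ∈ MIdx n m,
        a j k α β * (∏ i, ξ i ^ α i) * (∏ i, ξ i ^ β i) * ζ j * ζ k

/-- `u` solves the constant-coefficient `2m`-order `K×K` system `Lu = 0` on `O`. -/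
def SystemSol (n K m : ℕ)
    (a : Fin K → Fin K → (Fin (n + 1) → ℕ) → (Fin (n + 1) → ℕ) → ℝ)
    (O : Set (ES n)) (u : ES n → Fin K → ℝ) : Prop :=
  ∀ j : Fin K, ∀ X ∈ O,
    ∑ k : Fin K, ∑ α ∈ MIdx n m, ∑ β ∈ MIdx n m,
      a j k α β * mDeriv n α (mDeriv n β (fun Y => u Y k)) X = 0

/-- Partial derivative of a complex-valued function. -/
def pdC (n : ℕ) (i : Fin (n + 1)) (f : ES n → ℂ) : ES n → ℂ :=
  fun X => fderiv ℝ f X (EuclideanSpace.single i (1 : ℝ))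

/-- Iterated complex partial derivative. -/
def pdPowC (n : ℕ) (i : Fin (n + 1)) : ℕ → (ES n → ℂ) → ES n → ℂ
  | 0, f => f
  | k + 1, f => pdC n i (pdPowC n i k f)

/-- The multi-index derivative `∂^α f` of a complex-valued function. -/
def mDerivC (n : ℕ) (α : Fin (n + 1) → ℕ) (f : ES n → ℂ) : ES n → ℂ :=
  (List.finRange (n + 1)).foldr (fun i g => pdPowC n i (α i) g) f

/-!
On `D ⊆ ℝ^{n+1} ∖ E` one has `δ_{∂D} ≤ δ_E`, because a nearest point of `Dᶜ ⊇ E` lies on `∂D`;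
this gives the pointwise bound at once. For a Carleson box `B(x, r) ∩ D` with `x ∈ ∂D` there
are two cases. If some `z ∈ E` has `|x - z| < 2r`, the box lies in `B(z, 3r) ∖ E` and the
Carleson condition on `ℝ^{n+1} ∖ E` costs `3ⁿ Λ₂ rⁿ`. Otherwise `δ_E ≥ r` on the box, so
`|∇A|² δ_E ≤ (|∇A| δ_E)² / r ≤ Λ₁² / r` there, and integrating over a ball of volume
`|B(0,1)| r^{n+1}` costs `|B(0,1)| Λ₁² rⁿ`.
-/

theorem infDist_frontier_le_infDist_of_subset_compl {V : Type*} [NormedAddCommGroup V]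
    [NormedSpace ℝ V] [FiniteDimensional ℝ V] {D E : Set V} {X : V} (hE : E.Nonempty)
    (hDE : D ⊆ Eᶜ) (hX : X ∈ D) : infDist X (frontier D) ≤ infDist X E := by
  have hD : D ≠ univ := fun h => hE.ne_empty (by simpa [h] using hDE)
  obtain ⟨y, hy, hXy⟩ := exists_mem_frontier_infDist_compl_eq_dist hX hD
  calc infDist X (frontier D) ≤ dist X y := infDist_le_dist_of_mem hy
    _ = infDist X Dᶜ := hXy.symm
    _ ≤ infDist X E := infDist_le_infDist_of_subset (subset_compl_comm.mp hDE) hE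

theorem LocLipOn.mono {f : ES n → ℝ} {O D : Set (ES n)} (hf : LocLipOn n f O) (hD : IsOpen D)
    (hDO : D ⊆ O) : LocLipOn n f D := by
  intro x hx
  obtain ⟨K, ρ, hρ, -, hlip⟩ := hf x (hDO hx)
  obtain ⟨ε, hε, hεD⟩ := Metric.isOpen_iff.mp hD x hx
  exact ⟨K, min ρ ε, lt_min hρ hε, (ball_subset_ball (min_le_right _ _)).trans hεD,
    hlip.mono (ball_subset_ball (min_le_left _ _))⟩

section Carleson

variable {D E : Set (ES n)} {F : ES n → ℝ} {Λ₁ : ℝ}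

theorem ae_mul_infDist_frontier_le {μ : Measure (ES n)} (hE : E.Nonempty) (hD : IsOpen D)
    (hDE : D ⊆ Eᶜ) (hF₀ : ∀ X, 0 ≤ F X)
    (hF : ∀ᵐ X ∂μ.restrict Eᶜ, F X * infDist X E ≤ Λ₁) :
    ∀ᵐ X ∂μ.restrict D, F X * infDist X (frontier D) ≤ Λ₁ := by
  filter_upwards [ae_restrict_of_ae_restrict_of_subset hDE hF,
    ae_restrict_mem hD.measurableSet] with X hXE hXD
  exact (mul_le_mul_of_nonneg_left
    (infDist_frontier_le_infDist_of_subset_compl hE hDE hXD) (hF₀ X)).trans hXE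

theorem setLIntegral_ball_diff_le_CMEc {z : ES n} (hz : z ∈ E) {s : ℝ} (hs : 0 < s) :
    ∫⁻ Y in ball z s \ E, ENNReal.ofReal (F Y ^ 2 * infDist Y E) ≤
      ENNReal.ofReal (s ^ n) * CMEc n E F :=
  (ENNReal.inv_mul_le_iff (by positivity) ENNReal.ofReal_ne_top).mp <|
    le_iSup₂_of_le z hz <| le_iSup₂_of_le s hs le_rfl

theorem setLIntegral_infDist_frontier_le (hE : E.Nonempty) (hD : IsOpen D) (hDE : D ⊆ Eᶜ)
    (x : ES n) (r : ℝ) :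
    ∫⁻ Y in ball x r ∩ D, ENNReal.ofReal (F Y ^ 2 * infDist Y (frontier D)) ≤
      ∫⁻ Y in ball x r ∩ D, ENNReal.ofReal (F Y ^ 2 * infDist Y E) :=
  setLIntegral_mono' (measurableSet_ball.inter hD.measurableSet) fun _ hY =>
    ENNReal.ofReal_le_ofReal <| mul_le_mul_of_nonneg_left
      (infDist_frontier_le_infDist_of_subset_compl hE hDE hY.2) (sq_nonneg _)

theorem setLIntegral_le_CMEc_of_dist_lt {x z : ES n} {r : ℝ} (hDE : D ⊆ Eᶜ) (hz : z ∈ E)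
    (hxz : dist x z < 2 * r) :
    ∫⁻ Y in ball x r ∩ D, ENNReal.ofReal (F Y ^ 2 * infDist Y E) ≤
      ENNReal.ofReal (r ^ n) * (3 ^ n * CMEc n E F) := by
  have hr : 0 < r := by linarith [dist_nonneg (x := x) (y := z)]
  have hsub : ball x r ∩ D ⊆ ball z (3 * r) \ E := fun Y ⟨hYx, hYD⟩ =>
    ⟨by rw [mem_ball] at hYx ⊢; linarith [dist_triangle Y x z], hDE hYD⟩
  calc ∫⁻ Y in ball x r ∩ D, ENNReal.ofReal (F Y ^ 2 * infDist Y E)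
      ≤ ∫⁻ Y in ball z (3 * r) \ E, ENNReal.ofReal (F Y ^ 2 * infDist Y E) :=
        lintegral_mono_set hsub
    _ ≤ ENNReal.ofReal ((3 * r) ^ n) * CMEc n E F :=
        setLIntegral_ball_diff_le_CMEc hz (by positivity)
    _ = ENNReal.ofReal (r ^ n) * (3 ^ n * CMEc n E F) := by
        rw [mul_pow, ENNReal.ofReal_mul (by positivity), ENNReal.ofReal_pow zero_le_three,
          ENNReal.ofReal_ofNat, mul_comm (3 ^ n : ℝ≥0∞), mul_assoc]

theorem setLIntegral_le_of_le_infDist {x : ES n} {r : ℝ} (hr : 0 < r) (hD : IsOpen D)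
    (hDE : D ⊆ Eᶜ) (hF₀ : ∀ X, 0 ≤ F X)
    (hF : ∀ᵐ X ∂volume.restrict Eᶜ, F X * infDist X E ≤ Λ₁) (hxE : 2 * r ≤ infDist x E) :
    ∫⁻ Y in ball x r ∩ D, ENNReal.ofReal (F Y ^ 2 * infDist Y E) ≤
      ENNReal.ofReal (r ^ n) * (ENNReal.ofReal (Λ₁ ^ 2) * volume (ball (0 : ES n) 1)) := by
  have hbound : ∀ᵐ Y ∂volume.restrict (ball x r ∩ D),
      ENNReal.ofReal (F Y ^ 2 * infDist Y E) ≤ ENNReal.ofReal (Λ₁ ^ 2 / r) := by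
    filter_upwards [ae_restrict_of_ae_restrict_of_subset (inter_subset_right.trans hDE) hF,
      ae_restrict_mem (measurableSet_ball.inter hD.measurableSet)] with Y hYE hY
    have hrY : r ≤ infDist Y E := by
      linarith [infDist_le_infDist_add_dist (s := E) (x := x) (y := Y), mem_ball'.mp hY.1]
    refine ENNReal.ofReal_le_ofReal ((le_div_iff₀ hr).mpr ?_)
    calc F Y ^ 2 * infDist Y E * r ≤ F Y ^ 2 * infDist Y E * infDist Y E :=
          mul_le_mul_of_nonneg_left hrY (mul_nonneg (sq_nonneg _) infDist_nonneg)
      _ = (F Y * infDist Y E) ^ 2 := by ring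
      _ ≤ Λ₁ ^ 2 := pow_le_pow_left₀ (mul_nonneg (hF₀ Y) infDist_nonneg) hYE 2
  calc ∫⁻ Y in ball x r ∩ D, ENNReal.ofReal (F Y ^ 2 * infDist Y E)
      ≤ ∫⁻ _ in ball x r ∩ D, ENNReal.ofReal (Λ₁ ^ 2 / r) := lintegral_mono_ae hbound
    _ ≤ ENNReal.ofReal (Λ₁ ^ 2 / r) * volume (ball x r) := by
        rw [setLIntegral_const]; gcongr; exact inter_subset_left
    _ = ENNReal.ofReal (r ^ n) * (ENNReal.ofReal (Λ₁ ^ 2) * volume (ball (0 : ES n) 1)) := by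
        have hscale : Λ₁ ^ 2 / r * r ^ (n + 1) = r ^ n * Λ₁ ^ 2 := by
          field_simp
          ring
        rw [Measure.addHaar_ball volume x hr.le, finrank_euclideanSpace_fin, ← mul_assoc,
          ← ENNReal.ofReal_mul (by positivity), hscale, ENNReal.ofReal_mul (by positivity),
          mul_assoc]

theorem CME_le_three_pow_mul_CMEc_add (hE : E.Nonempty) (hD : IsOpen D) (hDE : D ⊆ Eᶜ) (hF₀ : ∀ X, 0 ≤ F X)
    (hF : ∀ᵐ X ∂volume.restrict Eᶜ, F X * infDist X E ≤ Λ₁) :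
    CME n D F ≤
      3 ^ n * CMEc n E F + ENNReal.ofReal (Λ₁ ^ 2) * volume (ball (0 : ES n) 1) := by
  refine iSup₂_le fun x _ => iSup₂_le fun r hr => ?_
  rw [ENNReal.inv_mul_le_iff (by positivity) ENNReal.ofReal_ne_top]
  refine (setLIntegral_infDist_frontier_le hE hD hDE x r).trans ?_
  rcases lt_or_ge (infDist x E) (2 * r) with hnear | hfar
  · obtain ⟨z, hz, hxz⟩ := (infDist_lt_iff hE).mp hnear
    exact (setLIntegral_le_CMEc_of_dist_lt hDE hz hxz).trans (by gcongr; exact le_self_add)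
  · exact (setLIntegral_le_of_le_infDist hr hD hDE hF₀ hF hfar).trans (by gcongr; exact le_add_self)

end Carleson

theorem KP_restriction_general (n : ℕ) :
    ∃ C : ℝ, 0 < C ∧
      ∀ (E : Set (ES n)) (A : ES n → Fin (n + 1) → Fin (n + 1) → ℝ) (lam Λ₁ Λ₂ : ℝ),
        E.Nonempty → IsClosed E → 1 ≤ lam →
        Elliptic n Eᶜ A lam → KPc n E A Λ₁ Λ₂ →
        ∀ D : Set (ES n), IsOpen D → D ⊆ Eᶜ →
          (∀ᵐ X ∂(volume.restrict D), gradA n A X * Metric.infDist X (frontier D) ≤ Λ₁) ∧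
            CME n D (gradA n A) ≤ ENNReal.ofReal (C * (Λ₂ + Λ₁ ^ 2)) ∧
            KP n D A Λ₁ (C * (Λ₂ + Λ₁ ^ 2)) := by
  set ω := volume.real (ball (0 : ES n) 1)
  refine ⟨3 ^ n + ω, by positivity, ?_⟩
  intro E A lam Λ₁ Λ₂ hE _ _ _ ⟨hΛ₁, hΛ₂, hLip, hF, hCMEc⟩ D hD hDE
  have hF₀ : ∀ X, 0 ≤ gradA n A X := fun _ => Real.sqrt_nonneg _
  have hpointwise := ae_mul_infDist_frontier_le hE hD hDE hF₀ hF
  have hCME : CME n D (gradA n A) ≤ ENNReal.ofReal ((3 ^ n + ω) * (Λ₂ + Λ₁ ^ 2)) :=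
    calc CME n D (gradA n A)
        ≤ 3 ^ n * ENNReal.ofReal Λ₂ + ENNReal.ofReal (Λ₁ ^ 2) * ENNReal.ofReal ω := by
          rw [ofReal_measureReal]
          exact (CME_le_three_pow_mul_CMEc_add hE hD hDE hF₀ hF).trans (by gcongr)
      _ = ENNReal.ofReal (3 ^ n * Λ₂ + Λ₁ ^ 2 * ω) := by
          rw [ENNReal.ofReal_add (by positivity) (by positivity), ENNReal.ofReal_mul (by positivity),
            ENNReal.ofReal_mul (by positivity), ENNReal.ofReal_pow zero_le_three,
            ENNReal.ofReal_ofNat]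
      _ ≤ ENNReal.ofReal ((3 ^ n + ω) * (Λ₂ + Λ₁ ^ 2)) := by
          gcongr
          have hω : 0 ≤ ω := measureReal_nonneg
          nlinarith [mul_nonneg (pow_nonneg zero_le_three n) (sq_nonneg Λ₁), mul_nonneg hω hΛ₂]
  exact ⟨hpointwise, hCME, hΛ₁, by positivity,
    fun i j => (hLip i j).mono hD hDE, hpointwise, hCME⟩

/-- Restriction of the Kenig–Pipher condition to subdomains. -/
theorem KP_restriction (n : ℕ) (hn : 1 ≤ n) :
    ∃ C : ℝ, 0 < C ∧
      ∀ (E : Set (ES n)) (A : ES n → Fin (n + 1) → Fin (n + 1) → ℝ) (lam Λ₁ Λ₂ : ℝ),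
        E.Nonempty → IsClosed E → 1 ≤ lam →
        Elliptic n Eᶜ A lam → KPc n E A Λ₁ Λ₂ →
        ∀ D : Set (ES n), IsOpen D → D ⊆ Eᶜ →
          (∀ᵐ X ∂(volume.restrict D), gradA n A X * Metric.infDist X (frontier D) ≤ Λ₁) ∧
            CME n D (gradA n A) ≤ ENNReal.ofReal (C * (Λ₂ + Λ₁ ^ 2)) ∧
            KP n D A Λ₁ (C * (Λ₂ + Λ₁ ^ 2)) :=
  KP_restriction_general n

end Paper
end
end

section
/- Gårding inequality for constant-coefficient Legendre–Hadamard systems: let (a^{jk}_{αβ}) be real constants as in the context, satisfying the Legendre–Hadamard condition with constant λ. Then for every φ = (φ₁,…,φ_K) ∈ C_c^∞(ℝ^{n+1}; ℂ^K), Re Σ_{j,k=1}^K Σ_{|α|=|β|=m} a^{jk}_{αβ} ∫_{ℝ^{n+1}} conj(∂^α φ_j(X)) · ∂^β φ_k(X) dX ≥ λ Σ_{j=1}^K Σ_{|α|=m} (m!/α!) ∫_{ℝ^{n+1}} |∂^α φ_j(X)|² dX. -/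
open MeasureTheory Metric Set
open scoped ENNReal NNReal

noncomputable section

namespace Paper

variable {n : ℕ}

variable {n : ℕ}

/-!
For `|α| = m`, Plancherel's theorem turns `∂^α φ_j` into `ξ^α ẑ_j(ξ)` with `ẑ := (2πi)^m 𝓕 φ`, so
both sides become integrals over frequency space and it suffices to compare the integrands. Pointwise
in `ξ`, the multinomial theorem `∑_{|α|=m} (m!/α!) ξ^{2α} = |ξ|^{2m}` turns the left integrand into
`λ |ξ|^{2m} |ẑ(ξ)|²`, while `Re (conj z_j z_k) = Re z_j Re z_k + Im z_j Im z_k` splits the right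
integrand into the Legendre–Hadamard forms of `Re ẑ(ξ)` and `Im ẑ(ξ)`.
-/

open scoped FourierTransform ContDiff ComplexConjugate

def IsTestFunction (f : ES n → ℂ) : Prop := ContDiff ℝ ∞ f ∧ HasCompactSupport f

namespace IsTestFunction

variable {f g : ES n → ℂ}

theorem integrable (hf : IsTestFunction f) : Integrable f :=
  hf.1.continuous.integrable_of_hasCompactSupport hf.2

theorem pdC (hf : IsTestFunction f) (i : Fin (n + 1)) : IsTestFunction (pdC n i f) :=
  ⟨(hf.1.fderiv_right le_rfl).clm_apply contDiff_const,
    (hf.2.fderiv ℝ).comp_left (g := fun L : ES n →L[ℝ] ℂ => L (EuclideanSpace.single i 1)) rfl⟩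

theorem pdPowC (hf : IsTestFunction f) (i : Fin (n + 1)) (k : ℕ) :
    IsTestFunction (pdPowC n i k f) := by
  induction k with
  | zero => exact hf
  | succ k ih => exact ih.pdC i

theorem foldr_pdPowC (hf : IsTestFunction f) (α : Fin (n + 1) → ℕ) (l : List (Fin (n + 1))) :
    IsTestFunction (l.foldr (fun i g => Paper.pdPowC n i (α i) g) f) := by
  induction l with
  | nil => exact hf
  | cons i l ih => exact ih.pdPowC i (α i)

theorem mDerivC (hf : IsTestFunction f) (α : Fin (n + 1) → ℕ) :
    IsTestFunction (mDerivC n α f) :=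
  hf.foldr_pdPowC α _

theorem fourier_pdC (hf : IsTestFunction f) (i : Fin (n + 1)) (ξ : ES n) :
    𝓕 (Paper.pdC n i f) ξ = 2 * Real.pi * Complex.I * ξ i * 𝓕 f ξ := by
  have hdf : Integrable (fderiv ℝ f) :=
    (hf.1.continuous_fderiv (by simp)).integrable_of_hasCompactSupport (hf.2.fderiv ℝ)
  unfold Paper.pdC
  rw [← Real.fourier_continuousLinearMap_apply hdf,
    Real.fourier_fderiv hf.integrable (hf.1.differentiable (by simp)) hdf,
    VectorFourier.fourierSMulRight_apply]
  simp [innerSL_apply_apply ℝ, EuclideanSpace.inner_single_right]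
  ring

theorem fourier_pdPowC (hf : IsTestFunction f) (i : Fin (n + 1)) (k : ℕ) (ξ : ES n) :
    𝓕 (Paper.pdPowC n i k f) ξ = (2 * Real.pi * Complex.I * ξ i) ^ k * 𝓕 f ξ := by
  induction k with
  | zero => simp [Paper.pdPowC]
  | succ k ih => rw [Paper.pdPowC, (hf.pdPowC i k).fourier_pdC, ih, pow_succ']; ring

theorem fourier_foldr_pdPowC (hf : IsTestFunction f) (α : Fin (n + 1) → ℕ)
    (l : List (Fin (n + 1))) (ξ : ES n) :
    𝓕 (l.foldr (fun i g => Paper.pdPowC n i (α i) g) f) ξ =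
      (l.map fun i => (2 * Real.pi * Complex.I * ξ i) ^ α i).prod * 𝓕 f ξ := by
  induction l with
  | nil => simp
  | cons i l ih =>
    rw [List.foldr_cons, (hf.foldr_pdPowC α l).fourier_pdPowC, ih, List.map_cons, List.prod_cons,
      (mul_assoc _ _ _).symm]

theorem fourier_mDerivC (hf : IsTestFunction f) (α : Fin (n + 1) → ℕ) (ξ : ES n) :
    𝓕 (Paper.mDerivC n α f) ξ =
      (∏ i, ξ i ^ α i : ℝ) • ((2 * Real.pi * Complex.I) ^ (∑ i, α i) * 𝓕 f ξ) := by
  rw [Paper.mDerivC, hf.fourier_foldr_pdPowC, ← Fin.prod_univ_def, Complex.real_smul]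
  push_cast
  rw [← Finset.prod_pow_eq_pow_sum, ← mul_assoc, ← Finset.prod_mul_distrib]
  simp only [mul_pow, mul_comm]

def toSchwartzMap (hf : IsTestFunction f) : SchwartzMap (ES n) ℂ := hf.2.toSchwartzMap hf.1

@[simp]
theorem coe_toSchwartzMap (hf : IsTestFunction f) : ⇑hf.toSchwartzMap = f := rfl

theorem coe_fourier_toSchwartzMap (hf : IsTestFunction f) :
    ⇑(𝓕 hf.toSchwartzMap : SchwartzMap (ES n) ℂ) = 𝓕 f := by
  rw [SchwartzMap.fourier_coe]; rfl

theorem integrable_conj_fourier_mul_fourier (hf : IsTestFunction f) (hg : IsTestFunction g) :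
    Integrable fun ξ => conj (𝓕 f ξ) * 𝓕 g ξ := by
  have := ((𝓕 hf.toSchwartzMap).memLp 2 volume).star.integrable_mul
    ((𝓕 hg.toSchwartzMap).memLp 2 volume)
  rwa [coe_fourier_toSchwartzMap, coe_fourier_toSchwartzMap] at this

theorem integrable_norm_fourier_sq (hf : IsTestFunction f) :
    Integrable fun ξ => ‖𝓕 f ξ‖ ^ 2 := by
  have := ((𝓕 hf.toSchwartzMap).memLp 2 volume).integrable_norm_pow two_ne_zero
  rwa [coe_fourier_toSchwartzMap] at this

theorem integral_conj_fourier_mul_fourier (hf : IsTestFunction f) (hg : IsTestFunction g) :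
    ∫ ξ, conj (𝓕 f ξ) * 𝓕 g ξ = ∫ x, conj (f x) * g x := by
  simpa only [coe_fourier_toSchwartzMap, coe_toSchwartzMap, RCLike.inner_apply, mul_comm] using
    SchwartzMap.integral_inner_fourier_fourier hf.toSchwartzMap hg.toSchwartzMap

theorem integral_norm_fourier_sq (hf : IsTestFunction f) :
    ∫ ξ, ‖𝓕 f ξ‖ ^ 2 = ∫ x, ‖f x‖ ^ 2 := by
  simpa only [coe_fourier_toSchwartzMap, coe_toSchwartzMap] using
    SchwartzMap.integral_norm_sq_fourier hf.toSchwartzMap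

end IsTestFunction

theorem sum_eq_of_mem_MIdx {m : ℕ} {α : Fin (n + 1) → ℕ} (h : α ∈ MIdx n m) : ∑ i, α i = m :=
  Finset.Nat.mem_antidiagonalTuple.mp h

theorem MIdx_eq_piAntidiag (n m : ℕ) : MIdx n m = Finset.univ.piAntidiag m := by
  ext α
  simp [MIdx, Finset.Nat.mem_antidiagonalTuple, Finset.mem_piAntidiag]

theorem cast_multinomial_of_mem_MIdx {m : ℕ} {α : Fin (n + 1) → ℕ} (h : α ∈ MIdx n m) :
    (Nat.multinomial Finset.univ α : ℝ) =
      (Nat.factorial m : ℝ) / ∏ i, (Nat.factorial (α i) : ℝ) := by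
  rw [eq_div_iff (by positivity), ← sum_eq_of_mem_MIdx h, ← Nat.multinomial_spec]
  push_cast
  ring

theorem sum_MIdx_multinomial_mul_sq (m : ℕ) (ξ : ES n) :
    ∑ α ∈ MIdx n m, ((Nat.factorial m : ℝ) / ∏ i, (Nat.factorial (α i) : ℝ)) *
      (∏ i, ξ i ^ α i) ^ 2 = ‖ξ‖ ^ (2 * m) := by
  rw [pow_mul, EuclideanSpace.real_norm_sq_eq, Finset.sum_pow_eq_sum_piAntidiag,
    ← MIdx_eq_piAntidiag]
  refine Finset.sum_congr rfl fun α hα => ?_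
  rw [cast_multinomial_of_mem_MIdx hα, ← Finset.prod_pow]
  simp only [← pow_mul, mul_comm 2]

theorem LegendreHadamard.mul_sum_norm_sq_le_re {K m : ℕ}
    {a : Fin K → Fin K → (Fin (n + 1) → ℕ) → (Fin (n + 1) → ℕ) → ℝ} {lam : ℝ}
    (hLH : LegendreHadamard n K m a lam) (ξ : ES n) (z : Fin K → ℂ) :
    lam * ‖ξ‖ ^ (2 * m) * ∑ j, ‖z j‖ ^ 2 ≤
      (∑ j, ∑ k, ∑ α ∈ MIdx n m, ∑ β ∈ MIdx n m,
        (a j k α β * (∏ i, ξ i ^ α i) * (∏ i, ξ i ^ β i) : ℝ) * (conj (z j) * z k)).re := by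
  have hre := hLH ξ fun j => (z j).re
  have him := hLH ξ fun j => (z j).im
  simp only [Complex.re_sum, Complex.mul_re, Complex.ofReal_re, Complex.ofReal_im, zero_mul,
    sub_zero, Complex.conj_re, Complex.conj_im, neg_mul, sub_neg_eq_add,
    ← Complex.normSq_eq_norm_sq, Complex.normSq_apply]
  calc _ = lam * ‖ξ‖ ^ (2 * m) * ∑ j, (z j).re ^ 2 +
        lam * ‖ξ‖ ^ (2 * m) * ∑ j, (z j).im ^ 2 := by
        simp only [← mul_add, ← Finset.sum_add_distrib, sq]
    _ ≤ _ := add_le_add hre him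
    _ = _ := by simp only [mul_assoc, ← mul_add, ← Finset.sum_add_distrib]

theorem LegendreHadamard.garding_pointwise {K m : ℕ}
    {a : Fin K → Fin K → (Fin (n + 1) → ℕ) → (Fin (n + 1) → ℕ) → ℝ} {lam : ℝ}
    (hLH : LegendreHadamard n K m a lam) (ξ : ES n) (z : Fin K → ℂ)
    (Ψ : Fin K → (Fin (n + 1) → ℕ) → ℂ)
    (hΨ : ∀ j, ∀ α ∈ MIdx n m, Ψ j α = (∏ i, ξ i ^ α i : ℝ) • z j) :
    lam * ∑ j, ∑ α ∈ MIdx n m,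
        ((Nat.factorial m : ℝ) / ∏ i, (Nat.factorial (α i) : ℝ)) * ‖Ψ j α‖ ^ 2 ≤
      (∑ j, ∑ k, ∑ α ∈ MIdx n m, ∑ β ∈ MIdx n m,
        (a j k α β : ℂ) * (conj (Ψ j α) * Ψ k β)).re := by
  convert hLH.mul_sum_norm_sq_le_re ξ z using 1
  · have hsq (j : Fin K) : ∑ α ∈ MIdx n m,
        ((Nat.factorial m : ℝ) / ∏ i, (Nat.factorial (α i) : ℝ)) * ‖Ψ j α‖ ^ 2 =
          ‖ξ‖ ^ (2 * m) * ‖z j‖ ^ 2 := by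
      rw [← sum_MIdx_multinomial_mul_sq, Finset.sum_mul]
      refine Finset.sum_congr rfl fun α hα => ?_
      rw [hΨ j α hα, norm_smul, mul_pow, Real.norm_eq_abs, sq_abs, mul_assoc]
    simp only [hsq, ← Finset.mul_sum, mul_assoc]
  · congr 1
    refine Finset.sum_congr rfl fun j _ => Finset.sum_congr rfl fun k _ =>
      Finset.sum_congr rfl fun α hα => Finset.sum_congr rfl fun β hβ => ?_
    rw [hΨ j α hα, hΨ k β hβ, Complex.real_smul, Complex.real_smul, map_mul, Complex.conj_ofReal]
    push_cast
    ring

theorem sum_mul_integral_norm_sq_eq_integral_fourier {ι κ : Type*} (s : Finset ι)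
    (t : Finset κ) (c : κ → ℝ) {F : ι → κ → ES n → ℂ} (hF : ∀ j α, IsTestFunction (F j α)) :
    ∑ j ∈ s, ∑ α ∈ t, c α * ∫ x, ‖F j α x‖ ^ 2 =
      ∫ ξ, ∑ j ∈ s, ∑ α ∈ t, c α * ‖𝓕 (F j α) ξ‖ ^ 2 := by
  have hint := fun j α => (hF j α).integrable_norm_fourier_sq
  simp only [← (hF _ _).integral_norm_fourier_sq, ← integral_const_mul]
  simp (disch := intros; fun_prop) only [integral_finsetSum]

theorem sum_mul_integral_conj_mul_eq_integral_fourier {ι κ : Type*} (s : Finset ι)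
    (t : Finset κ) (b : ι → ι → κ → κ → ℂ) {F : ι → κ → ES n → ℂ}
    (hF : ∀ j α, IsTestFunction (F j α)) :
    ∑ j ∈ s, ∑ k ∈ s, ∑ α ∈ t, ∑ β ∈ t, b j k α β * ∫ x, conj (F j α x) * F k β x =
      ∫ ξ, ∑ j ∈ s, ∑ k ∈ s, ∑ α ∈ t, ∑ β ∈ t,
        b j k α β * (conj (𝓕 (F j α) ξ) * 𝓕 (F k β) ξ) := by
  have hint := fun j k α β => (hF j α).integrable_conj_fourier_mul_fourier (hF k β)
  simp only [← (hF _ _).integral_conj_fourier_mul_fourier (hF _ _), ← integral_const_mul]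
  simp (disch := intros; fun_prop) only [integral_finsetSum]

theorem garding_inequality_general (n K m : ℕ) (lam : ℝ)
    (a : Fin K → Fin K → (Fin (n + 1) → ℕ) → (Fin (n + 1) → ℕ) → ℝ)
    (hLH : LegendreHadamard n K m a lam) :
    ∀ φ : ES n → Fin K → ℂ, ContDiff ℝ (⊤ : ℕ∞) φ → HasCompactSupport φ →
      lam * ∑ j : Fin K, ∑ α ∈ MIdx n m,
          ((Nat.factorial m : ℝ) / ∏ i, (Nat.factorial (α i) : ℝ)) *
            ∫ X : ES n, ‖mDerivC n α (fun Y => φ Y j) X‖ ^ 2 ≤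
        (∑ j : Fin K, ∑ k : Fin K, ∑ α ∈ MIdx n m, ∑ β ∈ MIdx n m,
            (a j k α β : ℂ) *
              ∫ X : ES n, (starRingEnd ℂ) (mDerivC n α (fun Y => φ Y j) X) *
                mDerivC n β (fun Y => φ Y k) X).re := by
  intro φ hφ hφc
  have hφj (j : Fin K) : IsTestFunction fun Y => φ Y j :=
    ⟨contDiff_pi.mp hφ j, hφc.comp_left (g := fun v : Fin K → ℂ => v j) rfl⟩
  have hD (j : Fin K) (α : Fin (n + 1) → ℕ) := (hφj j).mDerivC α
  have hnorm := fun j α => (hD j α).integrable_norm_fourier_sq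
  have hconj := fun j k α β => (hD j α).integrable_conj_fourier_mul_fourier (hD k β)
  rw [sum_mul_integral_norm_sq_eq_integral_fourier _ _ _ hD,
    sum_mul_integral_conj_mul_eq_integral_fourier _ _ _ hD, ← integral_const_mul]
  refine (integral_mono (by fun_prop) (Integrable.re (𝕜 := ℂ) (by fun_prop)) fun ξ => ?_).trans_eq
    (integral_re (𝕜 := ℂ) (by fun_prop))
  refine hLH.garding_pointwise ξ (fun j => (2 * Real.pi * Complex.I) ^ m * 𝓕 (fun Y => φ Y j) ξ)
    (fun j α => 𝓕 (mDerivC n α fun Y => φ Y j) ξ) fun j α hα => ?_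
  rw [(hφj j).fourier_mDerivC, sum_eq_of_mem_MIdx hα]

/-- Gårding inequality for constant-coefficient Legendre–Hadamard
systems. -/
theorem garding_inequality (n K m : ℕ) (hK : 1 ≤ K) (hm : 1 ≤ m) (lam : ℝ)
    (hlam : 0 < lam)
    (a : Fin K → Fin K → (Fin (n + 1) → ℕ) → (Fin (n + 1) → ℕ) → ℝ)
    (hsym : ∀ j k α β, a j k α β = a k j α β)
    (hLH : LegendreHadamard n K m a lam) :
    ∀ φ : ES n → Fin K → ℂ, ContDiff ℝ (⊤ : ℕ∞) φ → HasCompactSupport φ →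
      lam * ∑ j : Fin K, ∑ α ∈ MIdx n m,
          ((Nat.factorial m : ℝ) / ∏ i, (Nat.factorial (α i) : ℝ)) *
            ∫ X : ES n, ‖mDerivC n α (fun Y => φ Y j) X‖ ^ 2 ≤
        (∑ j : Fin K, ∑ k : Fin K, ∑ α ∈ MIdx n m, ∑ β ∈ MIdx n m,
            (a j k α β : ℂ) *
              ∫ X : ES n, (starRingEnd ℂ) (mDerivC n α (fun Y => φ Y j) X) *
                mDerivC n β (fun Y => φ Y k) X).re :=
  garding_inequality_general n K m lam a hLH

end Paper
end
end

section
/- Control of the interior Whitney-ball Carleson quantity by Carleson norms on Lipschitz subdomains: there is M_n ≥ 1, depending only on n, such that for every n-dimensional ADR set E ⊆ ℝ^{n+1} and every locally square-integrable function F on ℝ^{n+1}∖E, one has ‖F‖_{CME₀(ℝ^{n+1}∖E)} ≤ 2^{n+1} · sup{ ‖F‖_{CME(D)} : D ⊆ ℝ^{n+1}∖E is a bounded Lipschitz domain with Lipschitz character at most M_n }, where ‖F‖_{CME₀(ℝ^{n+1}∖E)} := sup over X ∉ E of dist(X,E)^{1−n} ∫_{B(X, dist(X,E)/2)} |F(Y)|²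 dY, as an inequality in [0,∞]. -/
open MeasureTheory Metric Set
open scoped ENNReal NNReal

noncomputable section

namespace Paper

variable {n : ℕ}

variable {n : ℕ}

/-! The ball `B(X, d)`, `d = dist(X, E)`, avoids `E` and is a Lipschitz domain of character
bounded independently of `X` and `d`: after a rigid motion it is, near each boundary point, the
region above a clamped spherical cap, which is a `1`-Lipschitz graph, and a `1 / 8`-net of the unit
sphere supplies finitely many such charts. On the Whitney ball `B(X, d / 2)` the distance to
`∂B(X, d)` is at least `d / 2`, and `B(X, d / 2) ⊆ B(x₀, 3d / 2)` for every `x₀ ∈ ∂B(X, d)`, so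
testing `CME(B(X, d))` at `(x₀, 3d / 2)` gives the bound with constant `2 (3 / 2)ⁿ ≤ 2ⁿ⁺¹`. -/

theorem _root_.IsCompact.exists_fin_cover_balls {α : Type*} [PseudoMetricSpace α] {s : Set α}
    (hs : IsCompact s) (hne : s.Nonempty) {ε : ℝ} (hε : 0 < ε) :
    ∃ (m : ℕ) (p : Fin m → α), 1 ≤ m ∧ (∀ i, p i ∈ s) ∧ s ⊆ ⋃ i, ball (p i) ε := by
  obtain ⟨t, hts, hcover⟩ := hs.elim_nhds_subcover (fun x => ball x ε)
    fun x _ => ball_mem_nhds x hε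
  have ht : t.Nonempty := by
    obtain ⟨x, hx⟩ := hne
    obtain ⟨y, hy, -⟩ := mem_iUnion₂.1 (hcover hx)
    exact ⟨y, hy⟩
  refine ⟨t.card, fun i => t.equivFin.symm i, ht.card_pos, fun i => hts _ (t.equivFin.symm i).2,
    fun x hx => ?_⟩
  obtain ⟨y, hy, hxy⟩ := mem_iUnion₂.1 (hcover hx)
  exact mem_iUnion.2 ⟨t.equivFin ⟨y, hy⟩, by simpa using hxy⟩

lemma abs_sqrt_sub_sq_sub_sqrt_sub_sq_le {c a b : ℝ} (ha : 0 ≤ a) (hb : 0 ≤ b)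
    (habc : a ^ 2 + b ^ 2 ≤ c) : |√(c - a ^ 2) - √(c - b ^ 2)| ≤ |a - b| := by
  set A := √(c - a ^ 2)
  set B := √(c - b ^ 2)
  have hA : A ^ 2 = c - a ^ 2 := Real.sq_sqrt (by nlinarith)
  have hB : B ^ 2 = c - b ^ 2 := Real.sq_sqrt (by nlinarith)
  have hAB : 0 ≤ A + B := add_nonneg (Real.sqrt_nonneg _) (Real.sqrt_nonneg _)
  have hsum : a + b ≤ A + B := by
    have haB : a ≤ B := (Real.le_sqrt ha (by nlinarith)).2 (by linarith)
    have hbA : b ≤ A := (Real.le_sqrt hb (by nlinarith)).2 (by linarith)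
    linarith
  have key : |A - B| * (A + B) ≤ |a - b| * (A + B) :=
    calc |A - B| * (A + B) = |(A - B) * (A + B)| := by rw [abs_mul, abs_of_nonneg hAB]
      _ = |a - b| * (a + b) := by
          rw [show (A - B) * (A + B) = (b - a) * (b + a) by linear_combination hA - hB, abs_mul,
            abs_sub_comm, add_comm b a, abs_of_nonneg (add_nonneg ha hb)]
      _ ≤ |a - b| * (A + B) := mul_le_mul_of_nonneg_left hsum (abs_nonneg _)
  rcases hAB.eq_or_lt with h | h
  · have hA0 : A = 0 := by linarith [Real.sqrt_nonneg (c - a ^ 2), Real.sqrt_nonneg (c - b ^ 2)]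
    have hB0 : B = 0 := by linarith [Real.sqrt_nonneg (c - a ^ 2), Real.sqrt_nonneg (c - b ^ 2)]
    simp [hA0, hB0]
  · exact le_of_mul_le_mul_right key h

def verticalUnit (n : ℕ) : ES n := EuclideanSpace.single (Fin.last n) 1

@[simp]
lemma initCoords_zero : initCoords (0 : ES n) = 0 := by
  ext i
  simp [initCoords]

@[simp]
lemma lastCoord_zero : lastCoord (0 : ES n) = 0 := rfl

@[simp]
lemma initCoords_smul_verticalUnit (c : ℝ) : initCoords (c • verticalUnit n) = 0 := by
  ext i
  simp [initCoords, verticalUnit]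

@[simp]
lemma lastCoord_smul_verticalUnit (c : ℝ) : lastCoord (c • verticalUnit n) = c := by
  simp [lastCoord, verticalUnit]

lemma dist_sq_eq_dist_initCoords_sq_add (y z : ES n) :
    dist y z ^ 2 = dist (initCoords y) (initCoords z) ^ 2 + (lastCoord y - lastCoord z) ^ 2 := by
  rw [EuclideanSpace.dist_eq, EuclideanSpace.dist_eq, Real.sq_sqrt (by positivity),
    Real.sq_sqrt (by positivity), Fin.sum_univ_castSucc]
  simp [initCoords, lastCoord, Real.dist_eq, sq_abs]

lemma zero_mem_frontier_upperGraph {ψ : EuclideanSpace ℝ (Fin n) → ℝ} (hψ : ψ 0 = 0) :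
    (0 : ES n) ∈ frontier (upperGraph ψ) := by
  have h0 : (0 : ES n) ∉ upperGraph ψ := by simp [upperGraph, hψ]
  refine ⟨Metric.mem_closure_iff.2 fun ε hε => ⟨(ε / 2) • verticalUnit n, ?_, ?_⟩,
    fun h => h0 (interior_subset h)⟩
  · show ψ (initCoords _) < lastCoord _
    simp only [initCoords_smul_verticalUnit, lastCoord_smul_verticalUnit, hψ]
    linarith
  · simp [verticalUnit, norm_smul, abs_of_pos hε]
    linarith

lemma graphCylinder_apply_zero (e : ES n ≃ᵃⁱ[ℝ] ES n) (ρ h : ℝ) :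
    graphCylinder e (e 0) ρ h = e '' {y | ‖initCoords y‖ < ρ ∧ |lastCoord y| < h / 2} := by
  simp [graphCylinder]

/-- Near the origin the graph of `ballGraph n d` is the lower cap of the sphere of radius `d`
centred at `d • verticalUnit n`; the clamp at `‖y'‖ = d / 4` makes it globally `1`-Lipschitz. -/
def ballGraph (n : ℕ) (d : ℝ) (y' : EuclideanSpace ℝ (Fin n)) : ℝ :=
  d - √(d ^ 2 - min ‖y'‖ (d / 4) ^ 2)

lemma ballGraph_zero {d : ℝ} (hd : 0 ≤ d) : ballGraph n d 0 = 0 := by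
  simp [ballGraph, min_eq_left (by linarith : (0 : ℝ) ≤ d / 4), Real.sqrt_sq hd]

lemma lipschitzWith_one_ballGraph {d : ℝ} (hd : 0 ≤ d) : LipschitzWith 1 (ballGraph n d) := by
  refine LipschitzWith.of_dist_le_mul fun y z => ?_
  have hclamp : ∀ w : EuclideanSpace ℝ (Fin n), 0 ≤ min ‖w‖ (d / 4) ∧ min ‖w‖ (d / 4) ≤ d / 4 :=
    fun w => ⟨le_min (norm_nonneg _) (by linarith), min_le_right _ _⟩
  obtain ⟨hy0, hy⟩ := hclamp y
  obtain ⟨hz0, hz⟩ := hclamp z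
  calc dist (ballGraph n d y) (ballGraph n d z)
      = |√(d ^ 2 - min ‖z‖ (d / 4) ^ 2) - √(d ^ 2 - min ‖y‖ (d / 4) ^ 2)| := by
        rw [Real.dist_eq, ballGraph, ballGraph, sub_sub_sub_cancel_left]
    _ ≤ |min ‖z‖ (d / 4) - min ‖y‖ (d / 4)| :=
        abs_sqrt_sub_sq_sub_sqrt_sub_sq_le hz0 hy0 (by nlinarith)
    _ ≤ |‖z‖ - ‖y‖| := by simpa using abs_min_sub_min_le_max ‖z‖ (d / 4) ‖y‖ (d / 4)
    _ ≤ 1 * dist y z := by rw [one_mul, dist_comm, dist_eq_norm]; exact abs_norm_sub_norm_le z y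

lemma mem_ball_iff_mem_upperGraph_ballGraph {d : ℝ} (hd : 0 < d) {y : ES n}
    (h₁ : ‖initCoords y‖ ≤ d / 4) (h₂ : lastCoord y < d) :
    y ∈ ball (d • verticalUnit n) d ↔ y ∈ upperGraph (ballGraph n d) := by
  set s := ‖initCoords y‖
  set t := lastCoord y
  have hR : √(d ^ 2 - s ^ 2) ^ 2 = d ^ 2 - s ^ 2 :=
    Real.sq_sqrt (by nlinarith [norm_nonneg (initCoords y)])
  have hR0 : 0 ≤ √(d ^ 2 - s ^ 2) := Real.sqrt_nonneg _
  have hball : y ∈ ball (d • verticalUnit n) d ↔ s ^ 2 + (t - d) ^ 2 < d ^ 2 := by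
    rw [mem_ball, ← pow_lt_pow_iff_left₀ dist_nonneg hd.le two_ne_zero,
      dist_sq_eq_dist_initCoords_sq_add]
    simp [s, t]
  have hgraph : y ∈ upperGraph (ballGraph n d) ↔ d - √(d ^ 2 - s ^ 2) < t := by
    simp only [upperGraph, ballGraph, mem_ofPred_eq, min_eq_left h₁, s, t]
  rw [hball, hgraph]
  constructor
  · intro h
    nlinarith
  · intro h
    nlinarith [mul_self_lt_mul_self (by linarith : (0 : ℝ) ≤ d - t) (by linarith : d - t < _)]

lemma exists_graph_chart_ball (X : ES n) {d : ℝ} (hd : 0 < d) {u : ES n} (hu : ‖u‖ = 1) :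
    ∃ (e : ES n ≃ᵃⁱ[ℝ] ES n) (ψ : EuclideanSpace ℝ (Fin n) → ℝ),
      LipschitzWith (1 : ℝ).toNNReal ψ ∧ X + d • u ∈ frontier (e '' upperGraph ψ) ∧
        graphCylinder e (X + d • u) (2 * (d / 8)) (8 * (1 + 1) * (d / 8)) ∩ ball X d =
          graphCylinder e (X + d • u) (2 * (d / 8)) (8 * (1 + 1) * (d / 8)) ∩
            e '' upperGraph ψ := by
  -- Reflect the vertical axis onto the inner normal `-u`, then translate the origin to `X + d • u`.
  set L : ES n ≃ₗᵢ[ℝ] ES n := Submodule.reflection (ℝ ∙ (verticalUnit n - -u))ᗮ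
  have hL : L (verticalUnit n) = -u :=
    Submodule.reflection_sub (by simp [verticalUnit, hu])
  set e : ES n ≃ᵃⁱ[ℝ] ES n :=
    L.toAffineIsometryEquiv.trans (AffineIsometryEquiv.constVAdd ℝ (ES n) (X + d • u))
  have he : ∀ y, e y = X + d • u + L y := fun y => by simp [e, vadd_eq_add]
  have he0 : e 0 = X + d • u := by simp [he]
  have hball : ball X d = e '' ball (d • verticalUnit n) d := by
    have hcentre : e (d • verticalUnit n) = X := by
      rw [he, map_smul, hL, smul_neg, add_neg_cancel_right]
    rw [← hcentre]
    exact (e.toIsometryEquiv.image_ball _ _).symm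
  refine ⟨e, ballGraph n d, by simpa using lipschitzWith_one_ballGraph hd.le, ?_, ?_⟩
  · rw [← he0, ← AffineIsometryEquiv.coe_toHomeomorph, ← Homeomorph.image_frontier]
    exact mem_image_of_mem _ (zero_mem_frontier_upperGraph (ballGraph_zero hd.le))
  · rw [← he0, graphCylinder_apply_zero, hball, ← image_inter e.injective,
      ← image_inter e.injective]
    congr 1
    ext y
    simp only [mem_inter_iff, mem_ofPred_eq, and_congr_right_iff]
    rintro ⟨h₁, h₂⟩
    exact mem_ball_iff_mem_upperGraph_ballGraph hd (by linarith)
      (by linarith [le_abs_self (lastCoord y)])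

lemma isBddLipDomain_ball {m : ℕ} {p : Fin m → ES n} (hm : 1 ≤ m)
    (hp : ∀ i, p i ∈ sphere (0 : ES n) 1) (hcover : sphere (0 : ES n) 1 ⊆ ⋃ i, ball (p i) (1 / 8))
    (X : ES n) {d : ℝ} (hd : 0 < d) :
    IsBddLipDomain n (ball X d) 1 m 2 := by
  have hp' : ∀ i, ‖p i‖ = 1 := fun i => mem_sphere_zero_iff_norm.1 (hp i)
  refine ⟨isOpen_ball, (convex_ball X d).isConnected (nonempty_ball.2 hd), isBounded_ball,
    le_rfl, hm, one_le_two, d / 8, by positivity, fun j => X + d • p j, fun _ => d / 8,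
    fun j => ?_, fun _ => ⟨by linarith, by linarith⟩, ?_,
    fun j => exists_graph_chart_ball X hd (hp' j)⟩
  · simp [frontier_ball X hd.ne', norm_smul, abs_of_pos hd, hp']
  · intro z hz
    rw [frontier_ball X hd.ne', mem_sphere_iff_norm] at hz
    have hw : d⁻¹ • (z - X) ∈ sphere (0 : ES n) 1 := by
      simp [norm_smul, hz, abs_of_pos hd, hd.ne']
    obtain ⟨i, hi⟩ := mem_iUnion.1 (hcover hw)
    refine mem_iUnion.2 ⟨i, ?_⟩
    have hzi : z - (X + d • p i) = d • (d⁻¹ • (z - X) - p i) := by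
      rw [smul_sub, smul_inv_smul₀ hd.ne']
      abel
    rw [mem_ball, dist_eq_norm] at hi ⊢
    rw [hzi, norm_smul, Real.norm_of_nonneg hd.le]
    nlinarith

lemma exists_lipCharLe_ball (n : ℕ) :
    ∃ M : ℝ, 1 ≤ M ∧ ∀ (X : ES n) (d : ℝ), 0 < d → LipCharLe n (ball X d) M := by
  obtain ⟨m, p, hm, hp, hcover⟩ := (isCompact_sphere (0 : ES n) 1).exists_fin_cover_balls
    (NormedSpace.sphere_nonempty.2 zero_le_one) (by norm_num : (0 : ℝ) < 1 / 8)
  refine ⟨max 2 m, le_max_of_le_left one_le_two, fun X d hd => ?_⟩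
  exact ⟨1, m, 2, isBddLipDomain_ball hm hp hcover X hd,
    le_max_of_le_left one_le_two, le_max_right _ _, le_max_left _ _⟩

lemma sub_dist_le_infDist_sphere {E : Type*} [NormedAddCommGroup E] [NormedSpace ℝ E]
    [Nontrivial E] (X Y : E) {d : ℝ} (hd : 0 ≤ d) : d - dist Y X ≤ infDist Y (sphere X d) := by
  refine (le_infDist (NormedSpace.sphere_nonempty.2 hd)).2 fun z hz => ?_
  linarith [mem_sphere'.1 hz, dist_triangle X Y z, dist_comm X Y]

lemma lintegral_ball_half_le_CME_ball (F : ES n → ℝ) (X : ES n) {d : ℝ} (hd : 0 < d) :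
    ENNReal.ofReal (d / 2) * ∫⁻ Y in ball X (d / 2), ENNReal.ofReal (F Y ^ 2) ≤
      ENNReal.ofReal ((3 * d / 2) ^ n) * CME n (ball X d) F := by
  obtain ⟨x₀, hx₀⟩ := (NormedSpace.sphere_nonempty (x := X)).2 hd.le
  have hfr : frontier (ball X d) = sphere X d := frontier_ball X hd.ne'
  have hsub : ball X (d / 2) ⊆ ball x₀ (3 * d / 2) ∩ ball X d := fun Y hY => by
    have hY' := mem_ball.1 hY
    refine ⟨mem_ball.2 ?_, mem_ball.2 (by linarith)⟩
    linarith [dist_triangle Y X x₀, mem_sphere.1 hx₀, dist_comm X x₀]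
  rw [← ENNReal.inv_mul_le_iff (by simp; positivity) ENNReal.ofReal_ne_top]
  refine le_trans ?_ (le_iSup₂_of_le x₀ (hfr ▸ hx₀) (le_iSup₂_of_le (3 * d / 2)
    (by positivity) le_rfl))
  gcongr
  rw [← lintegral_const_mul' _ _ ENNReal.ofReal_ne_top]
  refine (setLIntegral_mono' measurableSet_ball fun Y hY => ?_).trans (lintegral_mono_set hsub)
  rw [← ENNReal.ofReal_mul (by positivity), mul_comm, hfr]
  gcongr
  linarith [sub_dist_le_infDist_sphere X Y hd.le, mem_ball.1 hY]

lemma ofReal_zpow_mul_lintegral_ball_half_le_CME_ball (F : ES n → ℝ) (X : ES n) {d : ℝ}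
    (hd : 0 < d) :
    ENNReal.ofReal (d ^ ((1 : ℤ) - n)) * ∫⁻ Y in ball X (d / 2), ENNReal.ofReal (F Y ^ 2) ≤
      2 ^ (n + 1) * CME n (ball X d) F := by
  have hdn : d ^ n ≠ 0 := pow_ne_zero _ hd.ne'
  calc ENNReal.ofReal (d ^ ((1 : ℤ) - n)) * ∫⁻ Y in ball X (d / 2), ENNReal.ofReal (F Y ^ 2)
      = ENNReal.ofReal (2 * (d ^ n)⁻¹) *
          (ENNReal.ofReal (d / 2) * ∫⁻ Y in ball X (d / 2), ENNReal.ofReal (F Y ^ 2)) := by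
        rw [← mul_assoc, ← ENNReal.ofReal_mul (by positivity), zpow_sub₀ hd.ne', zpow_one,
          zpow_natCast]
        congr 2
        field_simp
    _ ≤ ENNReal.ofReal (2 * (d ^ n)⁻¹) * (ENNReal.ofReal ((3 * d / 2) ^ n) * CME n (ball X d) F) :=
        mul_le_mul_right (lintegral_ball_half_le_CME_ball F X hd) _
    _ = ENNReal.ofReal (2 * (3 / 2) ^ n) * CME n (ball X d) F := by
        rw [← mul_assoc, ← ENNReal.ofReal_mul (by positivity)]
        congr 2
        rw [div_pow, mul_pow, div_pow]
        field_simp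
    _ ≤ 2 ^ (n + 1) * CME n (ball X d) F := by
        gcongr
        rw [← ENNReal.ofReal_ofNat 2, ← ENNReal.ofReal_pow zero_le_two, pow_succ']
        gcongr
        norm_num

theorem CME0_le_sup_CME_Lipschitz_general (n : ℕ) :
    ∃ Mn : ℝ, 1 ≤ Mn ∧
      ∀ (E : Set (ES n)) (C₁ : ℝ) (F : ES n → ℝ), ADR n E C₁ → LocL2 n Eᶜ F →
        (⨆ (X : ES n) (_ : X ∉ E),
            ENNReal.ofReal (Metric.infDist X E ^ ((1 : ℤ) - n)) *
              ∫⁻ Y in ball X (Metric.infDist X E / 2), ENNReal.ofReal (F Y ^ 2)) ≤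
          2 ^ (n + 1) *
            ⨆ (D : Set (ES n)) (_ : D ⊆ Eᶜ) (_ : LipCharLe n D Mn), CME n D F := by
  obtain ⟨M, hM, hLip⟩ := exists_lipCharLe_ball n
  refine ⟨M, hM, fun E _ F hE _ => iSup₂_le fun X hX => ?_⟩
  obtain ⟨hne, hclosed, -⟩ := hE
  have hd : 0 < infDist X E := (hclosed.notMem_iff_infDist_pos hne).1 hX
  calc _ ≤ 2 ^ (n + 1) * CME n (ball X (infDist X E)) F :=
        ofReal_zpow_mul_lintegral_ball_half_le_CME_ball F X hd
    _ ≤ _ := by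
        gcongr
        exact le_iSup₂_of_le (ball X (infDist X E)) ball_infDist_subset_compl
          (le_iSup_of_le (hLip X _ hd) le_rfl)

/-- Control of the interior Whitney-ball Carleson quantity `CME₀`
by Carleson norms on Lipschitz subdomains. -/
theorem CME0_le_sup_CME_Lipschitz (n : ℕ) (hn : 1 ≤ n) :
    ∃ Mn : ℝ, 1 ≤ Mn ∧
      ∀ (E : Set (ES n)) (C₁ : ℝ) (F : ES n → ℝ), ADR n E C₁ → LocL2 n Eᶜ F →
        (⨆ (X : ES n) (_ : X ∉ E),
            ENNReal.ofReal (Metric.infDist X E ^ ((1 : ℤ) - n)) *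
              ∫⁻ Y in ball X (Metric.infDist X E / 2), ENNReal.ofReal (F Y ^ 2)) ≤
          2 ^ (n + 1) *
            ⨆ (D : Set (ES n)) (_ : D ⊆ Eᶜ) (_ : LipCharLe n D Mn), CME n D F :=
  CME0_le_sup_CME_Lipschitz_general n

end Paper
end
end
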